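/- For every positive integer n and every integer k with 0 ≤ k ≤ n-1, the number of 132-avoiding permutations of [n] having exactly k descents equals the number of 132-avoiding permutations of [n] having exactly n-1-k descents. -/

import Mathlib

/-!
A nonempty 132-avoiding permutation has the form `α n β` with every entry of `α` above every
entry of `β`, and `α`, `β` again 132-avoiding; recursively, 132-avoiding permutations of `[n]`
correspond to binary trees with `n` nodes. Under this correspondence the descents are the nodes
with a nonempty right subtree (a descent sits right after each maximum `n` followed by a
nonempty `β`). Mirroring the tree exchanges left and right subtrees, and every node except the
root is the left or the right child of exactly one node, so the descent numbers of a tree and of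
its mirror add up to `n - 1`.
-/

/-- A permutation `p` of `[n]` (modelled on `Fin n`, 0-based) is 132-avoiding if there
are no positions `i < j < k` with `p i < p k < p j`. -/
def Avoids132 {n : ℕ} (p : Equiv.Perm (Fin n)) : Prop :=
  ¬ ∃ i j k : Fin n, i < j ∧ j < k ∧ p i < p k ∧ p k < p j

/-- The descent set of `p`, in the 1-based convention of the paper: `i ∈ D(p)` iff
`1 ≤ i ≤ n-1` and `p_i > p_{i+1}`, where `p_i` denotes the `i`-th entry of `p` in
1-based indexing (so `p_i = p ⟨i-1⟩` in 0-based indexing). -/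
def DescentSet {n : ℕ} (p : Equiv.Perm (Fin n)) : Finset ℕ :=
  (Finset.range n).filter (fun i => ∃ h : 1 ≤ i ∧ i < n, p ⟨i, h.2⟩ < p ⟨i - 1, by omega⟩)

namespace List

section LinearOrder

variable {α β : Type*} [LinearOrder α] [LinearOrder β]

def numDescents : List α → ℕ
  | a :: b :: l => numDescents (b :: l) + if b < a then 1 else 0
  | _ => 0

def Avoids132 (l : List α) : Prop :=
  ∀ x y z, [x, y, z] <+ l → ¬ (x < z ∧ z < y)

theorem numDescents_eq_card (l : List α) :
    numDescents l = ((Finset.range l.length).filter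
      fun i => ∃ h : 1 ≤ i ∧ i < l.length, l[i] < l[i - 1]).card := by
  match l with
  | [] | [_] => rfl
  | a :: b :: t =>
    rw [numDescents, numDescents_eq_card (b :: t), Finset.card_filter, Finset.card_filter]
    simp only [length_cons, Finset.sum_range_succ' _ (t.length + 1),
      Finset.sum_range_succ' _ t.length]
    simp

theorem numDescents_map {f : α → β} (hf : StrictMono f) :
    ∀ l : List α, numDescents (l.map f) = numDescents l
  | [] | [_] => rfl
  | a :: b :: l => by
    simp only [map_cons, numDescents, hf.lt_iff_lt]
    rw [← map_cons, numDescents_map hf (b :: l)]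

theorem numDescents_append_cons_of_forall_lt {A : List α} {m : α} (hA : ∀ a ∈ A, a < m)
    (v : List α) : numDescents (A ++ m :: v) = numDescents A + numDescents (m :: v) := by
  induction A with
  | nil => simp [numDescents]
  | cons x A ih =>
    have hx := hA x mem_cons_self
    rcases A with _ | ⟨y, A⟩
    · simp [numDescents, hx.not_gt]
    · simp only [cons_append, numDescents] at ih ⊢
      rw [ih fun a ha => hA a (mem_cons_of_mem x ha)]
      omega

theorem numDescents_cons_of_forall_lt {m : α} {v : List α} (hv : ∀ b ∈ v, b < m) :
    numDescents (m :: v) = numDescents v + if v = [] then 0 else 1 := by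
  rcases v with _ | ⟨b, v⟩
  · rfl
  · simp [numDescents, hv b mem_cons_self]

theorem Avoids132.sublist {l l' : List α} (h : l.Avoids132) (hl' : l' <+ l) : l'.Avoids132 :=
  fun x y z hs => h x y z (hs.trans hl')

theorem avoids132_map_iff {f : α → β} (hf : StrictMono f) {l : List α} :
    (l.map f).Avoids132 ↔ l.Avoids132 := by
  constructor
  · intro h x y z hs hxyz
    exact h _ _ _ (hs.map f) ⟨hf hxyz.1, hf hxyz.2⟩
  · intro h x y z hs hxyz
    obtain ⟨l', hl', hxyz'⟩ := sublist_map_iff.mp hs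
    match l', hxyz' with
    | [x', y', z'], hxyz' =>
      simp only [map_cons, map_nil, cons.injEq] at hxyz'
      obtain ⟨rfl, rfl, rfl, -⟩ := hxyz'
      exact h x' y' z' hl' ⟨hf.lt_iff_lt.mp hxyz.1, hf.lt_iff_lt.mp hxyz.2⟩

theorem Avoids132.append {A B : List α} (hA : A.Avoids132) (hB : B.Avoids132)
    (hAB : ∀ a ∈ A, ∀ b ∈ B, b < a) : (A ++ B).Avoids132 := by
  rintro x y z hs ⟨hxz, hzy⟩
  obtain ⟨s, t, hst, hs, ht⟩ := sublist_append_iff.mp hs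
  have cross (hx : x ∈ s) (hz : z ∈ t) : False :=
    (hAB x (hs.subset hx) z (ht.subset hz)).not_gt hxz
  match s, t, hst with
  | [], _, rfl => exact hB x y z ht ⟨hxz, hzy⟩
  | _, [], hst => exact hA x y z (by simpa [hst] using hs) ⟨hxz, hzy⟩
  | [_], _ :: _, hst =>
    simp only [cons_append, nil_append, cons.injEq] at hst
    obtain ⟨rfl, rfl, rfl⟩ := hst
    exact cross (by simp) (by simp)
  | [_, _], _ :: _, hst =>
    simp only [cons_append, nil_append, cons.injEq] at hst
    obtain ⟨rfl, rfl, rfl, rfl⟩ := hst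
    exact cross (by simp) (by simp)
  | _ :: _ :: _ :: _, _ :: _, hst => simp at hst

theorem Avoids132.append_singleton {A : List α} {m : α} (hA : A.Avoids132)
    (hm : ∀ a ∈ A, a < m) : (A ++ [m]).Avoids132 := by
  rintro x y z hs ⟨hxz, hzy⟩
  obtain ⟨s, t, hst, hs, ht⟩ := sublist_append_iff.mp hs
  match s, t, hst with
  | _, [], hst => exact hA x y z (by simpa [hst] using hs) ⟨hxz, hzy⟩
  | [_, _], [_], hst =>
    simp only [cons_append, nil_append, cons.injEq] at hst
    obtain ⟨rfl, rfl, rfl, -⟩ := hst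
    rw [singleton_sublist, mem_singleton] at ht
    exact (hm y (hs.subset (by simp))).not_gt (ht ▸ hzy)
  | _, _ :: _ :: _, _ => simp at ht
  | [], [_], hst | [_], [_], hst | _ :: _ :: _ :: _, [_], hst => simp at hst

theorem Avoids132.lt_of_append_cons {A B : List α} {m : α} (h : (A ++ m :: B).Avoids132)
    (hnd : (A ++ m :: B).Nodup) (hB : ∀ b ∈ B, b < m) : ∀ a ∈ A, ∀ b ∈ B, b < a := by
  intro a ha b hb
  have hab : a ≠ b := by
    rintro rfl
    exact disjoint_of_nodup_append hnd ha (mem_cons_of_mem m hb)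
  refine lt_of_le_of_ne (not_lt.mp fun hab' => h a m b ?_ ⟨hab', hB b hb⟩) hab.symm
  exact (singleton_sublist.mpr ha).append (cons_sublist_cons.mpr (singleton_sublist.mpr hb))

end LinearOrder

theorem perm_range_of_nodup {l : List ℕ} (hl : l.Nodup) (hlt : ∀ x ∈ l, x < l.length) :
    l ~ range l.length :=
  (hl.subperm fun x hx => mem_range.mpr (hlt x hx)).perm_of_length_le (by simp)

theorem exists_map_add_of_append_perm_range {A B : List ℕ}
    (hAB : A ++ B ~ range (A.length + B.length)) (cross : ∀ a ∈ A, ∀ b ∈ B, b < a) :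
    B ~ range B.length ∧ ∃ u, u ~ range u.length ∧ A = u.map (· + B.length) := by
  have hmem (x : ℕ) : x ∈ A ∨ x ∈ B ↔ x < A.length + B.length := by
    rw [← mem_append, hAB.mem_iff, mem_range]
  have hnd : (A ++ B).Nodup := hAB.nodup_iff.mpr nodup_range
  -- `B` contains every number below each of its elements, hence only numbers below `B.length`
  have hB_lt (y : ℕ) (hy : y ∈ B) : y < B.length := by
    have hsub : Finset.range (y + 1) ⊆ B.toFinset := fun z hz => by
      have hzy : z ≤ y := Nat.lt_succ_iff.mp (Finset.mem_range.mp hz)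
      have hz' : z < A.length + B.length := lt_of_le_of_lt hzy ((hmem y).mp (.inr hy))
      rcases (hmem z).mpr hz' with hzA | hzB
      · exact absurd (cross z hzA y hy) (not_lt.mpr hzy)
      · exact mem_toFinset.mpr hzB
    have := (Finset.card_le_card hsub).trans (toFinset_card_le B)
    simpa using this
  have hB : B ~ range B.length := perm_range_of_nodup (nodup_append.mp hnd).2.1 hB_lt
  have hA_ge (x : ℕ) (hx : x ∈ A) : B.length ≤ x := not_lt.mp fun hlt =>
    (cross x hx x (hB.mem_iff.mpr (mem_range.mpr hlt))).false
  have hA : (A.map (· - B.length)).map (· + B.length) = A := by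
    rw [map_map]
    exact (map_congr_left fun x hx => Nat.sub_add_cancel (hA_ge x hx)).trans (map_id A)
  refine ⟨hB, A.map (· - B.length), perm_range_of_nodup ?_ ?_, hA.symm⟩
  · exact Nodup.of_map _ (hA ▸ (nodup_append.mp hnd).1)
  · simp only [mem_map, length_map, forall_exists_index, and_imp, forall_apply_eq_imp_iff₂]
    intro x hx
    have := (hmem x).mp (.inl hx)
    have := hA_ge x hx
    omega

-- The `α n β` of the decomposition, with `α` and `β` given in standardized form `u`, `v`.
def joinAtMax (u v : List ℕ) : List ℕ :=
  u.map (· + v.length) ++ (u.length + v.length) :: v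

theorem length_joinAtMax (u v : List ℕ) :
    (joinAtMax u v).length = u.length + v.length + 1 := by
  simp [joinAtMax]; omega

theorem idxOf_joinAtMax {u : List ℕ} (hu : ∀ x ∈ u, x < u.length) (v : List ℕ) :
    (joinAtMax u v).idxOf (u.length + v.length) = u.length := by
  rw [joinAtMax, idxOf_append_of_notMem, idxOf_cons_self, length_map]
  · rfl
  simp only [mem_map, not_exists, not_and]
  intro x hx
  have := hu x hx
  omega

theorem joinAtMax_injective {u v u' v' : List ℕ} (hu : ∀ x ∈ u, x < u.length)
    (hu' : ∀ x ∈ u', x < u'.length) (h : joinAtMax u v = joinAtMax u' v') :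
    u = u' ∧ v = v' := by
  have hlen := congrArg length h
  simp only [length_joinAtMax] at hlen
  have hu_len : u.length = u'.length := by
    rw [← idxOf_joinAtMax hu v, ← idxOf_joinAtMax hu' v', h,
      show u.length + v.length = u'.length + v'.length by omega]
  obtain ⟨hmap, hcons⟩ := append_inj h (by simpa using hu_len)
  refine ⟨?_, (cons.inj hcons).2⟩
  rw [show v.length = v'.length by omega] at hmap
  exact map_injective_iff.mpr (add_left_injective _) hmap

theorem joinAtMax_perm_range {u v : List ℕ} (hu : u ~ range u.length) (hv : v ~ range v.length) :
    joinAtMax u v ~ range (joinAtMax u v).length := by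
  rw [length_joinAtMax, range_succ, add_comm u.length, range_add, joinAtMax]
  simp only [add_comm v.length]
  calc _ ~ (u.map (· + v.length) ++ v) ++ [u.length + v.length] :=
        perm_middle.trans (perm_append_singleton _ _).symm
    _ ~ (v ++ u.map (· + v.length)) ++ [u.length + v.length] := perm_append_comm.append_right _
    _ ~ _ := (hv.append (hu.map _)).append_right _

theorem Avoids132.joinAtMax {u v : List ℕ} (hu : u.Avoids132) (hv : v.Avoids132)
    (hu_lt : ∀ x ∈ u, x < u.length) (hv_lt : ∀ x ∈ v, x < v.length) :
    (joinAtMax u v).Avoids132 := by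
  rw [List.joinAtMax, ← singleton_append, ← append_assoc]
  refine .append (.append_singleton ((avoids132_map_iff add_left_strictMono).mpr hu) ?_)
    hv ?_
  · simp only [mem_map, forall_exists_index, and_imp, forall_apply_eq_imp_iff₂]
    intro x hx
    have := hu_lt x hx
    omega
  · simp only [mem_append, mem_map, mem_singleton]
    rintro a (⟨x, -, rfl⟩ | rfl) b hb <;> have := hv_lt b hb <;> omega

theorem numDescents_joinAtMax {u v : List ℕ} (hu : ∀ x ∈ u, x < u.length)
    (hv : ∀ x ∈ v, x < v.length) :
    numDescents (joinAtMax u v) = numDescents u + numDescents v + if v = [] then 0 else 1 := by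
  rw [joinAtMax, numDescents_append_cons_of_forall_lt, numDescents_map add_left_strictMono,
    numDescents_cons_of_forall_lt, add_assoc]
  · intro x hx
    have := hv x hx
    omega
  · simp only [mem_map, forall_exists_index, and_imp, forall_apply_eq_imp_iff₂]
    intro x hx
    have := hu x hx
    omega

theorem exists_eq_joinAtMax {l : List ℕ} (hl : l ~ range l.length) (h : l.Avoids132)
    (hne : l ≠ []) : ∃ u v, l = joinAtMax u v ∧ u ~ range u.length ∧ v ~ range v.length ∧
      u.Avoids132 ∧ v.Avoids132 := by
  obtain ⟨n, hn⟩ := Nat.exists_eq_succ_of_ne_zero (length_pos_iff.mpr hne).ne'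
  rw [hn] at hl
  obtain ⟨A, B, rfl⟩ := append_of_mem (hl.mem_iff.mpr self_mem_range_succ)
  have hlen : A.length + B.length = n := by simpa [← add_assoc] using hl.length_eq
  have hnd : (A ++ n :: B).Nodup := hl.nodup_iff.mpr nodup_range
  have hB_lt (b : ℕ) (hb : b ∈ B) : b < n := by
    have hb_le : b < n + 1 := mem_range.mp (hl.mem_iff.mp (by simp [hb]))
    have hb_ne : b ≠ n := by
      rintro rfl
      exact ((nodup_cons.mp (nodup_append.mp hnd).2.1).1 hb)
    omega
  have hAB : A ++ B ~ range (A.length + B.length) := by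
    rw [hlen]
    exact (perm_middle.symm.trans (hl.trans (range_succ ▸ perm_append_singleton n _))).cons_inv
  obtain ⟨hB, u, hu, rfl⟩ :=
    exists_map_add_of_append_perm_range hAB (h.lt_of_append_cons hnd hB_lt)
  refine ⟨u, B, ?_, hu, hB, ?_, ?_⟩
  · simp only [joinAtMax, ← hlen, length_map]
  · exact (avoids132_map_iff add_left_strictMono).mp (h.sublist (sublist_append_left _ _))
  · exact h.sublist ((sublist_cons_self n B).trans (sublist_append_right _ _))

end List

open scoped List

namespace BinaryTree

variable {α : Type*}

def mirror : BinaryTree α → BinaryTree α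
  | nil => nil
  | node a l r => node a r.mirror l.mirror

def numRightChildren : BinaryTree α → ℕ
  | nil => 0
  | node _ l nil => l.numRightChildren
  | node _ l r@(node ..) => l.numRightChildren + r.numRightChildren + 1

theorem mirror_involutive : Function.Involutive (mirror : BinaryTree α → BinaryTree α) := by
  intro t
  induction t <;> simp_all [mirror]

theorem numNodes_mirror (t : BinaryTree α) : t.mirror.numNodes = t.numNodes := by
  induction t <;> simp_all [mirror]; omega

theorem numRightChildren_add_numRightChildren_mirror (t : BinaryTree α) :
    t.numRightChildren + t.mirror.numRightChildren = t.numNodes - 1 := by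
  induction t with
  | nil => simp [mirror, numRightChildren]
  | node a l r ihl ihr =>
    cases l <;> cases r <;> simp_all [mirror, numRightChildren] <;> omega

def toList132 : BinaryTree Unit → List ℕ
  | nil => []
  | node _ l r => l.toList132.joinAtMax r.toList132

theorem length_toList132 (t : BinaryTree Unit) : t.toList132.length = t.numNodes := by
  induction t <;> simp_all [toList132, List.length_joinAtMax]

theorem toList132_perm_range (t : BinaryTree Unit) : t.toList132 ~ List.range t.numNodes := by
  induction t with
  | nil => simp [toList132]
  | node _ l r ihl ihr =>
    rw [← length_toList132] at ihl ihr ⊢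
    exact List.joinAtMax_perm_range ihl ihr

theorem lt_length_of_mem_toList132 {t : BinaryTree Unit} {x : ℕ} (hx : x ∈ t.toList132) :
    x < t.toList132.length :=
  List.mem_range.mp (((length_toList132 t).symm ▸ toList132_perm_range t).mem_iff.mp hx)

theorem avoids132_toList132 (t : BinaryTree Unit) : t.toList132.Avoids132 := by
  induction t with
  | nil => simp [toList132, List.Avoids132]
  | node _ l r ihl ihr =>
    exact ihl.joinAtMax ihr (fun _ => lt_length_of_mem_toList132)
      (fun _ => lt_length_of_mem_toList132)

theorem numDescents_toList132 (t : BinaryTree Unit) :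
    t.toList132.numDescents = t.numRightChildren := by
  induction t with
  | nil => simp [toList132, numRightChildren, List.numDescents]
  | node _ l r ihl ihr =>
    rw [toList132, List.numDescents_joinAtMax (fun _ => lt_length_of_mem_toList132)
      (fun _ => lt_length_of_mem_toList132), ihl, ihr]
    cases r <;> simp [toList132, numRightChildren, List.joinAtMax]

theorem toList132_injective : Function.Injective toList132 := by
  intro t t' h
  induction t generalizing t' with
  | nil => cases t' with
    | nil => rfl
    | node => simp [toList132, List.joinAtMax] at h
  | node _ l r ihl ihr => cases t' with
    | nil => simp [toList132, List.joinAtMax] at h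
    | node _ l' r' =>
      obtain ⟨hl, hr⟩ := List.joinAtMax_injective (fun _ => lt_length_of_mem_toList132)
        (fun _ => lt_length_of_mem_toList132) h
      rw [ihl hl, ihr hr]

theorem exists_toList132_eq {l : List ℕ} (hl : l ~ List.range l.length) (h : l.Avoids132) :
    ∃ t : BinaryTree Unit, t.toList132 = l := by
  induction hn : l.length using Nat.strong_induction_on generalizing l with
  | _ n ih =>
    rcases eq_or_ne l [] with rfl | hne
    · exact ⟨nil, rfl⟩
    obtain ⟨u, v, rfl, hu, hv, hau, hav⟩ := List.exists_eq_joinAtMax hl h hne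
    rw [List.length_joinAtMax] at hn
    obtain ⟨tu, rfl⟩ := ih u.length (by omega) hu hau rfl
    obtain ⟨tv, rfl⟩ := ih v.length (by omega) hv hav rfl
    exact ⟨node () tu tv, rfl⟩

end BinaryTree

namespace Equiv.Perm

variable {n : ℕ}

def oneLine (p : Perm (Fin n)) : List ℕ :=
  List.ofFn fun i => (p i : ℕ)

theorem oneLine_injective : Function.Injective (oneLine : Perm (Fin n) → List ℕ) := by
  intro p q h
  ext i
  exact congrFun (List.ofFn_injective h) i

theorem length_oneLine (p : Perm (Fin n)) : p.oneLine.length = n :=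
  List.length_ofFn

theorem oneLine_perm_range (p : Perm (Fin n)) : p.oneLine ~ List.range n := by
  have h := List.perm_range_of_nodup (l := p.oneLine)
    (List.nodup_ofFn.mpr (Fin.val_injective.comp p.injective)) (by simp [oneLine])
  rwa [length_oneLine] at h

theorem exists_oneLine_eq {l : List ℕ} (hl : l ~ List.range n) :
    ∃ p : Perm (Fin n), p.oneLine = l := by
  have hlen : l.length = n := by simpa using hl.length_eq
  have hlt (i : Fin n) : l[(i : ℕ)] < n := List.mem_range.mp (hl.mem_iff.mp (List.getElem_mem _))
  let f (i : Fin n) : Fin n := ⟨l[(i : ℕ)], hlt i⟩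
  have hf : Function.Injective f := fun i j hij =>
    Fin.ext ((hl.nodup_iff.mpr List.nodup_range).getElem_inj_iff.mp (Fin.mk.inj hij))
  refine ⟨Equiv.ofBijective f (Finite.injective_iff_bijective.mp hf), ?_⟩
  refine List.ext_getElem (by rw [length_oneLine, hlen]) fun i _ _ => ?_
  simp [oneLine, f]

theorem avoids132_iff_oneLine (p : Perm (Fin n)) : Avoids132 p ↔ p.oneLine.Avoids132 := by
  rw [oneLine, List.ofFn_eq_map]
  constructor
  · intro hp x y z hs hxyz
    obtain ⟨l', hl', hxyz'⟩ := List.sublist_map_iff.mp hs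
    match l', hxyz' with
    | [i, j, k], hxyz' =>
      simp only [List.map_cons, List.map_nil, List.cons.injEq] at hxyz'
      obtain ⟨rfl, rfl, rfl, -⟩ := hxyz'
      have hijk := (List.pairwise_lt_finRange n).sublist hl'
      simp only [List.pairwise_cons, List.mem_cons, List.not_mem_nil, forall_eq_or_imp,
        List.Pairwise.nil] at hijk
      exact hp ⟨i, j, k, hijk.1.1, hijk.2.1.1, hxyz⟩
  · rintro h ⟨i, j, k, hij, hjk, hxyz⟩
    have hijk : [i, j, k].Pairwise (· < ·) := by simp [hij, hjk, hij.trans hjk]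
    refine h (p i) (p j) (p k) ?_ hxyz
    exact (List.sublist_of_subperm_of_pairwise
      (List.Nodup.subperm (hijk.imp ne_of_lt) fun x _ => List.mem_finRange x) hijk
      (List.pairwise_lt_finRange n)).map fun i => (p i : ℕ)

theorem card_descentSet (p : Perm (Fin n)) : (DescentSet p).card = p.oneLine.numDescents := by
  rw [List.numDescents_eq_card]
  simp [DescentSet, oneLine]

end Equiv.Perm

open BinaryTree Equiv.Perm in
theorem image_oneLine_eq_image_toList132 (n k : ℕ) :
    oneLine '' {p : Equiv.Perm (Fin n) | Avoids132 p ∧ (DescentSet p).card = k} =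
      toList132 '' {t | t.numNodes = n ∧ t.numRightChildren = k} := by
  ext l
  simp only [Set.mem_image, Set.mem_ofPred_eq]
  constructor
  · rintro ⟨p, ⟨hp, rfl⟩, rfl⟩
    obtain ⟨t, ht⟩ := exists_toList132_eq (by rw [length_oneLine]; exact oneLine_perm_range p)
      ((avoids132_iff_oneLine p).mp hp)
    refine ⟨t, ⟨?_, ?_⟩, ht⟩
    · rw [← length_toList132, ht, length_oneLine]
    · rw [← numDescents_toList132, ht, card_descentSet]
  · rintro ⟨t, ⟨rfl, rfl⟩, rfl⟩
    obtain ⟨p, hp⟩ := exists_oneLine_eq (toList132_perm_range t)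
    refine ⟨p, ⟨(avoids132_iff_oneLine p).mpr (hp ▸ avoids132_toList132 t), ?_⟩, hp⟩
    rw [card_descentSet, hp, numDescents_toList132]

open BinaryTree Equiv.Perm in
theorem card_avoids132_eq_card_binaryTree (n k : ℕ) :
    Nat.card {p : Equiv.Perm (Fin n) // Avoids132 p ∧ (DescentSet p).card = k} =
    Nat.card {t : BinaryTree Unit // t.numNodes = n ∧ t.numRightChildren = k} := by
  rw [← Set.coe_ofPred, ← Set.coe_ofPred, ← Nat.card_image_of_injective toList132_injective,
    ← image_oneLine_eq_image_toList132, Nat.card_image_of_injective oneLine_injective]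

theorem stmt_4_general (n k : ℕ) (hk : k ≤ n - 1) :
    Nat.card {p : Equiv.Perm (Fin n) // Avoids132 p ∧ (DescentSet p).card = k} =
    Nat.card {p : Equiv.Perm (Fin n) // Avoids132 p ∧ (DescentSet p).card = n - 1 - k} := by
  rw [card_avoids132_eq_card_binaryTree, card_avoids132_eq_card_binaryTree]
  refine Nat.card_congr ((BinaryTree.mirror_involutive.toPerm _).subtypeEquiv fun t => ?_)
  have := t.numRightChildren_add_numRightChildren_mirror
  simp only [Function.Involutive.coe_toPerm, BinaryTree.numNodes_mirror]
  omega

/-- For `0 ≤ k ≤ n-1`, the number of 132-avoiding permutations of `[n]`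
with exactly `k` descents equals the number of those with exactly `n-1-k` descents. -/
theorem stmt_4 (n k : ℕ) (hn : 0 < n) (hk : k ≤ n - 1) :
    Nat.card {p : Equiv.Perm (Fin n) // Avoids132 p ∧ (DescentSet p).card = k} =
    Nat.card {p : Equiv.Perm (Fin n) // Avoids132 p ∧ (DescentSet p).card = n - 1 - k} :=
  stmt_4_general n k hk
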